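/- arXiv:2111.14641 — 5 statements merged into one kernel-verified Lean document; each statement's English description precedes it below -/
import Mathlib

section
/- Let K be a subspace of ℂ^n, Π_K the ℓ₂-orthogonal projector onto K, and Π_K^Θ the projector onto K orthogonal with respect to the inner product ⟨Θ·,Θ·⟩ (i.e., Π_K^Θ w = argmin_{v∈K} ‖Θ(w−v)‖). If Θ is an ε-embedding (ε<1) for the subspace K + span(w), then ‖(I−Π_K)w‖ ≤ ‖(I−Π_K^Θ)w‖ ≤ sqrt((1+ε)/(1−ε)) ‖(I−Π_K)w‖. -/
open scoped ComplexInnerProductSpace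

noncomputable section

/-!
The sketched residual `w - Pw` and the ℓ₂ residual `w - Π_K w` both lie in `K + span(w)`,
where `Θ` distorts squared norms by a factor in `[1 - ε, 1 + ε]`. The first inequality is the
minimality of `Π_K w`; for the second, `Pw` minimizes `‖Θ(w - ·)‖` over `K`, so
`(1 - ε)‖w - Pw‖² ≤ ‖Θ(w - Pw)‖² ≤ ‖Θ(w - Π_K w)‖² ≤ (1 + ε)‖w - Π_K w‖²`.
-/

theorem Submodule.sub_mem_sup_span_singleton {R M : Type*} [Ring R] [AddCommGroup M]
    [Module R M] (K : Submodule R M) (w : M) {v : M} (hv : v ∈ K) : w - v ∈ K ⊔ (R ∙ w) :=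
  sup_comm K _ ▸ Submodule.sub_mem_sup (Submodule.mem_span_singleton_self w) hv

section EpsEmbedding

variable {𝕜 E F : Type*} [RCLike 𝕜] [NormedAddCommGroup E] [InnerProductSpace 𝕜 E]
  [NormedAddCommGroup F] [InnerProductSpace 𝕜 F]

theorem Submodule.norm_sub_starProjection_le (K : Submodule 𝕜 E) [K.HasOrthogonalProjection]
    (w : E) {v : E} (hv : v ∈ K) : ‖w - K.starProjection w‖ ≤ ‖w - v‖ := by
  rw [Submodule.starProjection_minimal]
  exact ciInf_le ⟨0, Set.forall_mem_range.mpr fun _ => norm_nonneg _⟩ (⟨v, hv⟩ : K)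

def IsEpsEmbedding (Θ : E →ₗ[𝕜] F) (ε : ℝ) (V : Submodule 𝕜 E) : Prop :=
  ∀ x ∈ V, ∀ y ∈ V, ‖inner 𝕜 x y - inner 𝕜 (Θ x) (Θ y)‖ ≤ ε * ‖x‖ * ‖y‖

namespace IsEpsEmbedding

variable {Θ : E →ₗ[𝕜] F} {ε : ℝ} {V : Submodule 𝕜 E} {x y : E}

theorem abs_norm_sq_sub_norm_sq_le (h : IsEpsEmbedding Θ ε V) (hx : x ∈ V) :
    |‖x‖ ^ 2 - ‖Θ x‖ ^ 2| ≤ ε * ‖x‖ ^ 2 := by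
  have hxx := h x hx x hx
  rw [inner_self_eq_norm_sq_to_K, inner_self_eq_norm_sq_to_K, ← RCLike.ofReal_pow,
    ← RCLike.ofReal_pow, ← RCLike.ofReal_sub, RCLike.norm_ofReal] at hxx
  linarith

theorem one_sub_mul_norm_sq_le (h : IsEpsEmbedding Θ ε V) (hx : x ∈ V) :
    (1 - ε) * ‖x‖ ^ 2 ≤ ‖Θ x‖ ^ 2 := by
  linarith [(abs_le.mp (h.abs_norm_sq_sub_norm_sq_le hx)).2]

theorem norm_sq_le_one_add_mul (h : IsEpsEmbedding Θ ε V) (hx : x ∈ V) :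
    ‖Θ x‖ ^ 2 ≤ (1 + ε) * ‖x‖ ^ 2 := by
  linarith [(abs_le.mp (h.abs_norm_sq_sub_norm_sq_le hx)).1]

theorem norm_le_sqrt_mul_norm_of_norm_map_le (h : IsEpsEmbedding Θ ε V) (hε : ε < 1)
    (hx : x ∈ V) (hy : y ∈ V) (hΘ : ‖Θ x‖ ≤ ‖Θ y‖) :
    ‖x‖ ≤ √((1 + ε) / (1 - ε)) * ‖y‖ := by
  have hsq : ‖x‖ ^ 2 ≤ (1 + ε) / (1 - ε) * ‖y‖ ^ 2 := by
    rw [div_mul_eq_mul_div, le_div_iff₀ (sub_pos.mpr hε)]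
    calc ‖x‖ ^ 2 * (1 - ε) = (1 - ε) * ‖x‖ ^ 2 := mul_comm _ _
      _ ≤ ‖Θ x‖ ^ 2 := h.one_sub_mul_norm_sq_le hx
      _ ≤ ‖Θ y‖ ^ 2 := pow_le_pow_left₀ (norm_nonneg _) hΘ 2
      _ ≤ (1 + ε) * ‖y‖ ^ 2 := h.norm_sq_le_one_add_mul hy
  calc ‖x‖ = √(‖x‖ ^ 2) := (Real.sqrt_sq (norm_nonneg _)).symm
    _ ≤ √((1 + ε) / (1 - ε) * ‖y‖ ^ 2) := Real.sqrt_le_sqrt hsq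
    _ = √((1 + ε) / (1 - ε)) * ‖y‖ := by
      rw [Real.sqrt_mul' _ (sq_nonneg _), Real.sqrt_sq (norm_nonneg _)]

end IsEpsEmbedding

end EpsEmbedding

/-- Comparison of the residuals of the ℓ₂-orthogonal projection and the sketched
orthogonal projection, when Θ is an ε-embedding for K + span(w). -/
theorem sketched_projection_residual_bounds {n k : ℕ}
    (K : Submodule ℂ (EuclideanSpace ℂ (Fin n)))
    (Θ : EuclideanSpace ℂ (Fin n) →ₗ[ℂ] EuclideanSpace ℂ (Fin k))
    (w Pw : EuclideanSpace ℂ (Fin n)) (ε : ℝ) (hε : ε < 1)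
    (hemb : ∀ x ∈ K ⊔ (ℂ ∙ w), ∀ y ∈ K ⊔ (ℂ ∙ w),
      ‖⟪x, y⟫ - ⟪Θ x, Θ y⟫‖ ≤ ε * ‖x‖ * ‖y‖)
    (hPwK : Pw ∈ K) (hPw : ∀ v ∈ K, ‖Θ (w - Pw)‖ ≤ ‖Θ (w - v)‖) :
    ‖w - (K.orthogonalProjection w : EuclideanSpace ℂ (Fin n))‖ ≤ ‖w - Pw‖ ∧
      ‖w - Pw‖ ≤ Real.sqrt ((1 + ε) / (1 - ε)) *
        ‖w - (K.orthogonalProjection w : EuclideanSpace ℂ (Fin n))‖ := by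
  have hproj : K.starProjection w ∈ K := K.starProjection_apply_mem w
  refine ⟨K.norm_sub_starProjection_le w hPwK, ?_⟩
  exact IsEpsEmbedding.norm_le_sqrt_mul_norm_of_norm_map_le (V := K ⊔ (ℂ ∙ w)) hemb hε
    (K.sub_mem_sup_span_singleton w hPwK) (K.sub_mem_sup_span_singleton w hproj)
    (hPw _ hproj)
end
end

section
/- Under the same setup (Θ an ε-embedding for K + span(w), ε<1), the sketched projector satisfies (1/(1+ε))(‖Π_K w‖² − 2ε‖w‖²) ≤ ‖Π_K^Θ w‖² ≤ (1/(1−ε))(‖Π_K w‖² + 2ε‖w‖²). -/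
/-!
Both projections satisfy Pythagoras in their own geometry:
`‖w‖² = ‖Π_K w‖² + ‖w - Π_K w‖²` and `‖Θ w‖² = ‖Θ Pw‖² + ‖Θ (w - Pw)‖²`, and each is the best
approximation of `w` from `K` in its own norm. Passing between the two geometries with
`(1 - ε)‖x‖² ≤ ‖Θ x‖² ≤ (1 + ε)‖x‖²` on `K + span w`, and absorbing the leftover `ε‖Π_K w‖²` into
`2ε‖w‖²`, gives the bounds.
-/

open scoped InnerProductSpace

variable {𝕜 E F : Type*} [RCLike 𝕜] [NormedAddCommGroup E] [InnerProductSpace 𝕜 E]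
  [NormedAddCommGroup F] [InnerProductSpace 𝕜 F]

namespace Submodule

theorem norm_sub_starProjection_le_s2 (K : Submodule 𝕜 E) [K.HasOrthogonalProjection] (u : E)
    {v : E} (hv : v ∈ K) : ‖u - K.starProjection u‖ ≤ ‖u - v‖ := by
  rw [starProjection_minimal]
  exact ciInf_le ⟨0, by rintro _ ⟨_, rfl⟩; positivity⟩ (⟨v, hv⟩ : K)

theorem inner_sub_eq_zero_of_forall_norm_sub_le {K : Submodule 𝕜 E} {u q : E} (hq : q ∈ K)
    (hmin : ∀ v ∈ K, ‖u - q‖ ≤ ‖u - v‖) : ∀ v ∈ K, ⟪u - q, v⟫_𝕜 = 0 := by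
  refine (K.norm_eq_iInf_iff_inner_eq_zero hq).1 (le_antisymm ?_ ?_)
  · exact le_ciInf fun v => hmin v v.2
  · exact ciInf_le ⟨0, by rintro _ ⟨_, rfl⟩; positivity⟩ (⟨q, hq⟩ : K)

end Submodule

theorem norm_sq_eq_norm_sq_add_norm_sub_sq {u q : E} (h : ⟪q, u - q⟫_𝕜 = 0) :
    ‖u‖ ^ 2 = ‖q‖ ^ 2 + ‖u - q‖ ^ 2 := by
  simpa only [sq, add_sub_cancel] using
    norm_add_sq_eq_norm_sq_add_norm_sq_of_inner_eq_zero q (u - q) h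

theorem norm_sq_eq_norm_sq_starProjection_add (K : Submodule 𝕜 E) [K.HasOrthogonalProjection]
    (w : E) : ‖w‖ ^ 2 = ‖K.starProjection w‖ ^ 2 + ‖w - K.starProjection w‖ ^ 2 :=
  norm_sq_eq_norm_sq_add_norm_sub_sq <| inner_eq_zero_symm.1 <|
    K.starProjection_inner_eq_zero w _ (K.starProjection_apply_mem w)

theorem norm_sq_map_eq_of_forall_norm_map_sub_le {K : Submodule 𝕜 E} {Θ : E →ₗ[𝕜] F} {w q : E}
    (hq : q ∈ K) (hmin : ∀ v ∈ K, ‖Θ (w - q)‖ ≤ ‖Θ (w - v)‖) :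
    ‖Θ w‖ ^ 2 = ‖Θ q‖ ^ 2 + ‖Θ (w - q)‖ ^ 2 := by
  have horth := Submodule.inner_sub_eq_zero_of_forall_norm_sub_le (K := K.map Θ) (u := Θ w)
    (Submodule.mem_map_of_mem hq) (by rintro _ ⟨v, hv, rfl⟩; simpa only [map_sub] using hmin v hv)
  rw [map_sub]
  exact norm_sq_eq_norm_sq_add_norm_sub_sq <| inner_eq_zero_symm.1 <|
    horth _ (Submodule.mem_map_of_mem hq)

def IsSubspaceEmbedding (Θ : E →ₗ[𝕜] F) (V : Submodule 𝕜 E) (ε : ℝ) : Prop :=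
  ∀ x ∈ V, ∀ y ∈ V, ‖⟪x, y⟫_𝕜 - ⟪Θ x, Θ y⟫_𝕜‖ ≤ ε * ‖x‖ * ‖y‖

namespace IsSubspaceEmbedding

variable {Θ : E →ₗ[𝕜] F} {V : Submodule 𝕜 E} {ε : ℝ} {x : E}

theorem abs_norm_sq_sub_norm_sq_le (hΘ : IsSubspaceEmbedding Θ V ε) (hx : x ∈ V) :
    |‖x‖ ^ 2 - ‖Θ x‖ ^ 2| ≤ ε * ‖x‖ ^ 2 := by
  have h := hΘ x hx x hx
  rw [inner_self_eq_norm_sq_to_K, inner_self_eq_norm_sq_to_K, ← RCLike.ofReal_pow,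
    ← RCLike.ofReal_pow, ← RCLike.ofReal_sub, RCLike.norm_ofReal] at h
  linarith

theorem mul_norm_sq_nonneg (hΘ : IsSubspaceEmbedding Θ V ε) (hx : x ∈ V) : 0 ≤ ε * ‖x‖ ^ 2 :=
  (abs_nonneg _).trans (hΘ.abs_norm_sq_sub_norm_sq_le hx)

theorem norm_sq_le (hΘ : IsSubspaceEmbedding Θ V ε) (hx : x ∈ V) :
    ‖Θ x‖ ^ 2 ≤ (1 + ε) * ‖x‖ ^ 2 := by
  linarith [neg_abs_le (‖x‖ ^ 2 - ‖Θ x‖ ^ 2), hΘ.abs_norm_sq_sub_norm_sq_le hx]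

theorem le_norm_sq (hΘ : IsSubspaceEmbedding Θ V ε) (hx : x ∈ V) :
    (1 - ε) * ‖x‖ ^ 2 ≤ ‖Θ x‖ ^ 2 := by
  linarith [le_abs_self (‖x‖ ^ 2 - ‖Θ x‖ ^ 2), hΘ.abs_norm_sq_sub_norm_sq_le hx]

theorem eq_zero_of_neg (hΘ : IsSubspaceEmbedding Θ V ε) (hε : ε < 0) (hx : x ∈ V) : x = 0 := by
  have := hΘ.mul_norm_sq_nonneg hx
  have : ‖x‖ ^ 2 ≤ 0 := by nlinarith [sq_nonneg ‖x‖]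
  simpa using this

end IsSubspaceEmbedding

section SketchedProjection

variable {K : Submodule 𝕜 E} [K.HasOrthogonalProjection] {Θ : E →ₗ[𝕜] F} {w q : E} {ε : ℝ}

theorem norm_sq_starProjection_sub_le (hΘ : IsSubspaceEmbedding Θ (K ⊔ 𝕜 ∙ w) ε) (hq : q ∈ K)
    (hmin : ∀ v ∈ K, ‖Θ (w - q)‖ ≤ ‖Θ (w - v)‖) :
    ‖K.starProjection w‖ ^ 2 - 2 * ε * ‖w‖ ^ 2 ≤ (1 + ε) * ‖q‖ ^ 2 := by
  set P := K.starProjection w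
  have hPK : P ∈ K := K.starProjection_apply_mem w
  have hwV : w ∈ K ⊔ 𝕜 ∙ w := Submodule.mem_sup_right (Submodule.mem_span_singleton_self w)
  have hPV : P ∈ K ⊔ 𝕜 ∙ w := Submodule.mem_sup_left hPK
  calc ‖P‖ ^ 2 - 2 * ε * ‖w‖ ^ 2 ≤ (1 - ε) * ‖w‖ ^ 2 - (1 + ε) * ‖w - P‖ ^ 2 := by
        rw [norm_sq_eq_norm_sq_starProjection_add K w]
        linarith [hΘ.mul_norm_sq_nonneg hPV]
    _ ≤ ‖Θ w‖ ^ 2 - ‖Θ (w - P)‖ ^ 2 := by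
        linarith [hΘ.le_norm_sq hwV, hΘ.norm_sq_le (Submodule.sub_mem _ hwV hPV)]
    _ ≤ ‖Θ w‖ ^ 2 - ‖Θ (w - q)‖ ^ 2 := by gcongr; exact hmin P hPK
    _ = ‖Θ q‖ ^ 2 := by rw [norm_sq_map_eq_of_forall_norm_map_sub_le hq hmin]; ring
    _ ≤ (1 + ε) * ‖q‖ ^ 2 := hΘ.norm_sq_le (Submodule.mem_sup_left hq)

theorem mul_norm_sq_le_norm_sq_starProjection_add (hΘ : IsSubspaceEmbedding Θ (K ⊔ 𝕜 ∙ w) ε)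
    (hε : ε ≤ 1) (hq : q ∈ K) (hmin : ∀ v ∈ K, ‖Θ (w - q)‖ ≤ ‖Θ (w - v)‖) :
    (1 - ε) * ‖q‖ ^ 2 ≤ ‖K.starProjection w‖ ^ 2 + 2 * ε * ‖w‖ ^ 2 := by
  set P := K.starProjection w
  have hwV : w ∈ K ⊔ 𝕜 ∙ w := Submodule.mem_sup_right (Submodule.mem_span_singleton_self w)
  have hqV : q ∈ K ⊔ 𝕜 ∙ w := Submodule.mem_sup_left hq
  calc (1 - ε) * ‖q‖ ^ 2 ≤ ‖Θ q‖ ^ 2 := hΘ.le_norm_sq hqV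
    _ = ‖Θ w‖ ^ 2 - ‖Θ (w - q)‖ ^ 2 := by
        rw [norm_sq_map_eq_of_forall_norm_map_sub_le hq hmin]; ring
    _ ≤ (1 + ε) * ‖w‖ ^ 2 - (1 - ε) * ‖w - q‖ ^ 2 := by
        linarith [hΘ.norm_sq_le hwV, hΘ.le_norm_sq (Submodule.sub_mem _ hwV hqV)]
    _ ≤ (1 + ε) * ‖w‖ ^ 2 - (1 - ε) * ‖w - P‖ ^ 2 := by
        gcongr
        exact K.norm_sub_starProjection_le_s2 w hq
    _ ≤ ‖P‖ ^ 2 + 2 * ε * ‖w‖ ^ 2 := by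
        rw [norm_sq_eq_norm_sq_starProjection_add K w]
        linarith [hΘ.mul_norm_sq_nonneg (Submodule.mem_sup_left (K.starProjection_apply_mem w))]

end SketchedProjection

open scoped ComplexInnerProductSpace

/-- Norm bounds for the sketched orthogonal projection in terms of the ℓ₂ projection. -/
theorem sketched_projection_norm_bounds {n k : ℕ}
    (K : Submodule ℂ (EuclideanSpace ℂ (Fin n)))
    (Θ : EuclideanSpace ℂ (Fin n) →ₗ[ℂ] EuclideanSpace ℂ (Fin k))
    (w Pw : EuclideanSpace ℂ (Fin n)) (ε : ℝ) (hε : ε < 1)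
    (hemb : ∀ x ∈ K ⊔ (ℂ ∙ w), ∀ y ∈ K ⊔ (ℂ ∙ w),
      ‖⟪x, y⟫ - ⟪Θ x, Θ y⟫‖ ≤ ε * ‖x‖ * ‖y‖)
    (hPwK : Pw ∈ K) (hPw : ∀ v ∈ K, ‖Θ (w - Pw)‖ ≤ ‖Θ (w - v)‖) :
    (1 / (1 + ε)) *
        (‖(K.orthogonalProjection w : EuclideanSpace ℂ (Fin n))‖ ^ 2 - 2 * ε * ‖w‖ ^ 2)
      ≤ ‖Pw‖ ^ 2 ∧
      ‖Pw‖ ^ 2 ≤ (1 / (1 - ε)) *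
        (‖(K.orthogonalProjection w : EuclideanSpace ℂ (Fin n))‖ ^ 2 + 2 * ε * ‖w‖ ^ 2) := by
  have hΘ : IsSubspaceEmbedding Θ (K ⊔ ℂ ∙ w) ε := hemb
  rcases lt_or_ge ε 0 with hε₀ | hε₀
  · obtain rfl := hΘ.eq_zero_of_neg hε₀
      (Submodule.mem_sup_right (Submodule.mem_span_singleton_self w))
    obtain rfl := hΘ.eq_zero_of_neg hε₀ (Submodule.mem_sup_left hPwK)
    simp
  · rw [one_div_mul_eq_div, one_div_mul_eq_div, div_le_iff₀' (by linarith),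
      le_div_iff₀' (by linarith)]
    exact ⟨norm_sq_starProjection_sub_le hΘ hPwK hPw,
      mul_norm_sq_le_norm_sq_starProjection_add hΘ hε.le hPwK hPw⟩
end

section
/- Let A_m = Π_K^Θ A Π_K^Θ and let (λ, x) be an eigenpair of A. Assume Θ is an ε-embedding for V = K + AK + span(x). Let γ = max over unit vectors v ∈ K + span(x) of ‖Θ Π_K^Θ A (I − Π_K^Θ) v‖. Then ‖Θ(A_m − λ I) Π_K^Θ x‖ ≤ γ ‖(I − Π_K^Θ)x‖. -/
open scoped ComplexInnerProductSpace

noncomputable section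

/-- Sketched residual bound for (λ, Π_K^Θ x) with respect to A_m = Π_K^Θ A Π_K^Θ. -/
theorem sketched_rayleigh_ritz_residual_projected {n k : ℕ}
    (K : Submodule ℂ (EuclideanSpace ℂ (Fin n)))
    (A : EuclideanSpace ℂ (Fin n) →ₗ[ℂ] EuclideanSpace ℂ (Fin n))
    (Θ : EuclideanSpace ℂ (Fin n) →ₗ[ℂ] EuclideanSpace ℂ (Fin k))
    (P : EuclideanSpace ℂ (Fin n) →ₗ[ℂ] EuclideanSpace ℂ (Fin n))
    (hPK : ∀ u, P u ∈ K) (hPmin : ∀ u, ∀ v ∈ K, ‖Θ (u - P u)‖ ≤ ‖Θ (u - v)‖)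
    (lam : ℂ) (x : EuclideanSpace ℂ (Fin n)) (hx : x ≠ 0) (heig : A x = lam • x)
    (ε : ℝ) (hε : ε < 1)
    (hemb : ∀ u ∈ K ⊔ K.map A ⊔ (ℂ ∙ x), ∀ v ∈ K ⊔ K.map A ⊔ (ℂ ∙ x),
      ‖⟪u, v⟫ - ⟪Θ u, Θ v⟫‖ ≤ ε * ‖u‖ * ‖v‖)
    (γ : ℝ) (hγ : ∀ v ∈ K ⊔ (ℂ ∙ x), ‖v‖ = 1 → ‖Θ (P (A (v - P v)))‖ ≤ γ) :
    ‖Θ (P (A (P (P x))) - lam • P x)‖ ≤ γ * ‖x - P x‖ := by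
  -- Θ is injective on V
  have hinj : ∀ u ∈ K ⊔ K.map A ⊔ (ℂ ∙ x), Θ u = 0 → u = 0 := by
    intro u hu hΘ
    by_contra h0
    have h := hemb u hu u hu
    rw [hΘ] at h
    simp only [inner_zero_left, sub_zero] at h
    have hn : ‖(⟪u, u⟫ : ℂ)‖ = ‖u‖ * ‖u‖ := by
      rw [inner_self_eq_norm_sq_to_K, norm_pow]
      simp [sq]
    rw [hn] at h
    have hu0 : 0 < ‖u‖ := norm_pos_iff.mpr h0
    nlinarith [mul_pos hu0 hu0]
  -- P fixes K
  have hfix : ∀ u ∈ K, P u = u := by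
    intro u hu
    have h1 := hPmin u u hu
    simp only [sub_self, map_zero, norm_zero] at h1
    have h2 : Θ (u - P u) = 0 := norm_le_zero_iff.mp h1
    have hmem : u - P u ∈ K ⊔ K.map A ⊔ (ℂ ∙ x) := by
      apply Submodule.mem_sup_left
      exact Submodule.mem_sup_left (K.sub_mem hu (hPK u))
    have := hinj _ hmem h2
    have : u = P u := by linear_combination (norm := module) this
    exact this.symm
  have hPP : P (P x) = P x := hfix _ (hPK x)
  have hlam : lam • P x = P (A x) := by rw [heig, map_smul]
  set d := x - P x with hd
  have hPd : P d = 0 := by rw [hd, map_sub, hPP]; exact sub_self _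
  have hkey : Θ (P (A (P (P x))) - lam • P x) = -(Θ (P (A d))) := by
    rw [hPP, hlam, hd]
    simp only [map_sub, neg_sub]
  rw [hkey, norm_neg]
  by_cases hd0 : d = 0
  · rw [hd0]
    simp
  · set v : EuclideanSpace ℂ (Fin n) := ((‖d‖ : ℂ)⁻¹) • d with hv
    have hdn : (0:ℝ) < ‖d‖ := norm_pos_iff.mpr hd0
    have hvmem : v ∈ K ⊔ (ℂ ∙ x) := by
      apply Submodule.smul_mem
      exact Submodule.sub_mem _
        (Submodule.mem_sup_right (Submodule.mem_span_singleton_self x))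
        (Submodule.mem_sup_left (hPK x))
    have hvnorm : ‖v‖ = 1 := by
      rw [hv, norm_smul, norm_inv, Complex.norm_real, Real.norm_eq_abs,
        abs_of_nonneg (norm_nonneg d)]
      field_simp
    have hPv : P v = 0 := by rw [hv, map_smul, hPd, smul_zero]
    have h := hγ v hvmem hvnorm
    rw [hPv, sub_zero, hv, map_smul, map_smul, map_smul, norm_smul, norm_inv,
      Complex.norm_real, Real.norm_eq_abs, abs_of_nonneg (norm_nonneg d)] at h
    calc ‖Θ (P (A d))‖ = (‖d‖⁻¹ * ‖Θ (P (A d))‖) * ‖d‖ := by field_simp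
    _ ≤ γ * ‖d‖ := by
        apply mul_le_mul_of_nonneg_right h (le_of_lt hdn)
end
end

section
/- If Θ is an ε-embedding for subspace K and K is invariant under A (AK ⊆ K), then any pair (μ, u) with u ∈ K, u ≠ 0, satisfying the sketched Galerkin condition Π_K^Θ(Au − μu) = 0 is an exact eigenpair of A: Au = μu. -/
open scoped ComplexInnerProductSpace

noncomputable section

/-- On an invariant subspace, any sketched Galerkin pair is an exact eigenpair. -/
theorem sketched_galerkin_invariant_subspace_exact {n k : ℕ}
    (K : Submodule ℂ (EuclideanSpace ℂ (Fin n)))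
    (A : EuclideanSpace ℂ (Fin n) →ₗ[ℂ] EuclideanSpace ℂ (Fin n))
    (Θ : EuclideanSpace ℂ (Fin n) →ₗ[ℂ] EuclideanSpace ℂ (Fin k))
    (hinv : ∀ v ∈ K, A v ∈ K)
    (ε : ℝ) (hε : ε < 1)
    (hemb : ∀ x ∈ K, ∀ y ∈ K, ‖⟪x, y⟫ - ⟪Θ x, Θ y⟫‖ ≤ ε * ‖x‖ * ‖y‖)
    (μ : ℂ) (u : EuclideanSpace ℂ (Fin n)) (hu : u ∈ K) (hu0 : u ≠ 0)
    (hGal : ∀ v ∈ K, ⟪Θ v, Θ (A u - μ • u)⟫ = 0) :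
    A u = μ • u := by
  set r := A u - μ • u with hr_def
  have hrK : r ∈ K := K.sub_mem (hinv u hu) (K.smul_mem μ hu)
  have h0 : ⟪Θ r, Θ r⟫ = 0 := hGal r hrK
  have h1 := hemb r hrK r hrK
  rw [h0, sub_zero, inner_self_eq_norm_sq_to_K] at h1
  have h2 : (‖r‖ : ℝ) ^ 2 ≤ ε * (‖r‖ * ‖r‖) := by
    simpa [Complex.norm_real, mul_assoc] using h1
  have hr0 : r = 0 := by
    by_contra hne
    have hn : 0 < ‖r‖ := norm_pos_iff.mpr hne
    have hpos : 0 < ‖r‖ * ‖r‖ := mul_pos hn hn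
    have : ‖r‖ * ‖r‖ ≤ ε * (‖r‖ * ‖r‖) := by nlinarith [sq_nonneg ‖r‖]
    nlinarith
  exact sub_eq_zero.mp hr0
end
end

section
/- Under the Arnoldi identity (A+ΔA)Q_{1:p−1} = Q_{1:p}H with Q_{1:p} of full column rank, the GMRES solution u = Q_{1:p−1} argmin_z ‖Hz − Re‖ satisfies the quasi-optimality bound ‖(A+ΔA)u − b‖ ≤ cond(Q_{1:p}) · min_{v ∈ range(Q_{1:p−1})} ‖(A+ΔA)v − b‖, where b = Q_{1:p} Re. -/
/-!
By the Arnoldi identity, every residual over `range Q₁` (with `Q₁ = Q.submatrix id (Fin.castAdd m₂)`)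
is `Q` applied to a small residual: `(A + ΔA) (Q₁ w) - b = Q (H w - Re)`. Since
`σ_min ‖r‖ ≤ ‖Q r‖ ≤ σ_max ‖r‖` and `z₀` minimizes `‖H z - Re‖`, the residual of `u` is at most
`σ_max ‖H z₀ - Re‖ ≤ σ_max ‖H z - Re‖ ≤ (σ_max / σ_min) ‖Q (H z - Re)‖`. Full column rank makes
`σ_min` positive, because an injective linear map on a finite-dimensional space is antilipschitz.
-/

open Matrix

/-- Euclidean (ℓ₂) norm of a vector. -/
noncomputable def l2enorm {n : ℕ} (v : Fin n → ℝ) : ℝ := Real.sqrt (v ⬝ᵥ v)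

/-- Smallest singular value: infimum of ‖A x‖ over unit vectors x. -/
noncomputable def smin {k m : ℕ} (A : Matrix (Fin k) (Fin m) ℝ) : ℝ :=
  sInf ((fun x => l2enorm (A.mulVec x)) '' {x | l2enorm x = 1})

/-- Largest singular value (spectral norm): supremum of ‖A x‖ over unit vectors x. -/
noncomputable def smax {k m : ℕ} (A : Matrix (Fin k) (Fin m) ℝ) : ℝ :=
  sSup ((fun x => l2enorm (A.mulVec x)) '' {x | l2enorm x = 1})

/-- Frobenius norm. -/
noncomputable def frob {k m : ℕ} (A : Matrix (Fin k) (Fin m) ℝ) : ℝ :=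
  Real.sqrt (∑ i, ∑ j, (A i j) ^ 2)

open Metric Function

section SphereBounds

variable {E F : Type*} [NormedAddCommGroup E] [NormedSpace ℝ E]
  [NormedAddCommGroup F] [NormedSpace ℝ F]

theorem sInf_norm_image_sphere_mul_le (f : E →ₗ[ℝ] F) (x : E) :
    sInf ((fun y => ‖f y‖) '' sphere 0 1) * ‖x‖ ≤ ‖f x‖ := by
  rcases eq_or_ne x 0 with rfl | hx
  · simp
  have hx' : 0 < ‖x‖ := norm_pos_iff.2 hx
  have hunit : ‖x‖⁻¹ • x ∈ sphere (0 : E) 1 := by simp [norm_smul, hx'.ne']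
  have hle := csInf_le ⟨0, by rintro _ ⟨y, -, rfl⟩; exact norm_nonneg _⟩
    (Set.mem_image_of_mem (fun y => ‖f y‖) hunit)
  rw [map_smul, norm_smul, norm_inv, norm_norm, ← div_eq_inv_mul, le_div_iff₀ hx'] at hle
  exact hle

theorem sInf_norm_image_sphere_pos [FiniteDimensional ℝ E] [Nontrivial E] {f : E →ₗ[ℝ] F}
    (hf : Injective f) : 0 < sInf ((fun y => ‖f y‖) '' sphere 0 1) := by
  obtain ⟨K, hK, hanti⟩ := f.injective_iff_antilipschitz.1 hf
  have hK' : (0 : ℝ) < K := hK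
  refine (inv_pos.2 hK').trans_le <|
    le_csInf (((NormedSpace.sphere_nonempty (x := (0 : E))).2 zero_le_one).image _) ?_
  rintro _ ⟨y, hy, rfl⟩
  have hbound := ZeroHomClass.bound_of_antilipschitz f hanti y
  rw [mem_sphere_zero_iff_norm.1 hy] at hbound
  rwa [inv_le_iff_one_le_mul₀ hK', mul_comm]

theorem norm_apply_le_div_sInf_mul [FiniteDimensional ℝ E] (f : E →L[ℝ] F) (hf : Injective f)
    {x y : E} (hxy : ‖x‖ ≤ ‖y‖) :
    ‖f x‖ ≤ ‖f‖ / sInf ((fun y => ‖f y‖) '' sphere 0 1) * ‖f y‖ := by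
  set σ := sInf ((fun y => ‖f y‖) '' sphere 0 1)
  rcases subsingleton_or_nontrivial E with hE | hE
  · simp [Subsingleton.elim x 0]
  have hσ : 0 < σ := sInf_norm_image_sphere_pos (f := (f : E →ₗ[ℝ] F)) hf
  calc ‖f x‖ ≤ ‖f‖ * ‖y‖ := f.le_opNorm_of_le hxy
    _ ≤ ‖f‖ * (‖f y‖ / σ) := by
      gcongr
      rw [le_div_iff₀ hσ, mul_comm]
      exact sInf_norm_image_sphere_mul_le (f : E →ₗ[ℝ] F) y
    _ = ‖f‖ / σ * ‖f y‖ := by ring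

end SphereBounds

theorem Matrix.mulVec_injective_of_rank_eq {K m n : Type*} [Field K] [Fintype m] [Fintype n]
    {A : Matrix m n K} (h : A.rank = Fintype.card n) : Injective A.mulVec :=
  mulVec_injective_iff.2 <| linearIndependent_iff_card_eq_finrank_span.2 <| by
    rw [← h, rank_eq_finrank_span_cols]; rfl

theorem l2enorm_eq_norm {k : ℕ} (v : Fin k → ℝ) : l2enorm v = ‖WithLp.toLp 2 v‖ := by
  simp [l2enorm, EuclideanSpace.norm_eq, dotProduct, sq]

theorem l2enorm_mulVec_eq_norm {k m : ℕ} (A : Matrix (Fin k) (Fin m) ℝ) (x : Fin m → ℝ) :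
    l2enorm (A *ᵥ x) = ‖(toLpLin 2 2 A).toContinuousLinearMap (WithLp.toLp 2 x)‖ := by
  rw [l2enorm_eq_norm]
  rfl

theorem image_mulVec_unit_l2enorm {k m : ℕ} (A : Matrix (Fin k) (Fin m) ℝ) :
    (fun x => l2enorm (A *ᵥ x)) '' {x | l2enorm x = 1} =
      (fun y => ‖(toLpLin 2 2 A).toContinuousLinearMap y‖) '' sphere 0 1 := by
  ext r
  constructor
  · rintro ⟨x, hx, rfl⟩
    exact ⟨WithLp.toLp 2 x, by simpa [l2enorm_eq_norm] using hx, (l2enorm_mulVec_eq_norm A x).symm⟩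
  · rintro ⟨y, hy, rfl⟩
    exact ⟨WithLp.ofLp y, by simpa [l2enorm_eq_norm] using hy, l2enorm_mulVec_eq_norm A _⟩

theorem smax_eq_opNorm {k m : ℕ} (A : Matrix (Fin k) (Fin m) ℝ) :
    smax A = ‖(toLpLin 2 2 A).toContinuousLinearMap‖ := by
  rw [smax, image_mulVec_unit_l2enorm, ContinuousLinearMap.sSup_sphere_eq_norm]

theorem l2enorm_mulVec_le_smax_div_smin_mul {k m : ℕ} {A : Matrix (Fin k) (Fin m) ℝ}
    (hA : A.rank = m) {x y : Fin m → ℝ} (hxy : l2enorm x ≤ l2enorm y) :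
    l2enorm (A *ᵥ x) ≤ smax A / smin A * l2enorm (A *ᵥ y) := by
  set f := (toLpLin 2 2 A).toContinuousLinearMap
  have hf : Injective f := by
    have hA' : Injective A.mulVec := mulVec_injective_of_rank_eq (by rwa [Fintype.card_fin])
    intro v w hvw
    exact WithLp.ofLp_injective 2 (hA' (by simpa [f] using congrArg WithLp.ofLp hvw))
  rw [l2enorm_mulVec_eq_norm, l2enorm_mulVec_eq_norm, smin, smax_eq_opNorm,
    image_mulVec_unit_l2enorm]
  exact norm_apply_le_div_sInf_mul f hf (by rwa [← l2enorm_eq_norm, ← l2enorm_eq_norm])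

/-- Quasi-optimality of the randomized GMRES solution. -/
theorem randomized_gmres_quasi_optimality {n m₁ m₂ : ℕ}
    (A ΔA : Matrix (Fin n) (Fin n) ℝ)
    (Q : Matrix (Fin n) (Fin (m₁ + m₂)) ℝ) (H : Matrix (Fin (m₁ + m₂)) (Fin m₁) ℝ)
    (hrank : Q.rank = m₁ + m₂)
    (harnoldi : (A + ΔA) * Q.submatrix id (Fin.castAdd m₂) = Q * H)
    (Re : Fin (m₁ + m₂) → ℝ) (b : Fin n → ℝ) (hb : b = Q.mulVec Re)
    (z₀ : Fin m₁ → ℝ)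
    (hz₀ : ∀ z : Fin m₁ → ℝ, l2enorm (H.mulVec z₀ - Re) ≤ l2enorm (H.mulVec z - Re))
    (u : Fin n → ℝ) (hu : u = (Q.submatrix id (Fin.castAdd m₂)).mulVec z₀) :
    ∀ z : Fin m₁ → ℝ,
      l2enorm ((A + ΔA).mulVec u - b)
        ≤ (smax Q / smin Q) *
          l2enorm ((A + ΔA).mulVec ((Q.submatrix id (Fin.castAdd m₂)).mulVec z) - b) := by
  intro z
  have residual : ∀ w, (A + ΔA) *ᵥ (Q.submatrix id (Fin.castAdd m₂) *ᵥ w) - b =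
      Q *ᵥ (H *ᵥ w - Re) := fun w => by
    rw [hb, mulVec_mulVec, harnoldi, ← mulVec_mulVec, ← mulVec_sub]
  rw [hu, residual, residual]
  exact l2enorm_mulVec_le_smax_div_smin_mul hrank (hz₀ z)
end
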